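/- Let T be a tree of height ω₁. If T admits a nice successor-partition, then ◊_T holds. -/

import Mathlib

open Set

/-- The first uncountable ordinal `ω₁`. -/
noncomputable def omega1 : Ordinal := Ordinal.omega 1

section TreeDefs

variable {T : Type*} [PartialOrder T]

/-- In a tree, the set of strict predecessors of any node is linearly ordered. -/
def PredsChain (T : Type*) [PartialOrder T] : Prop :=
  ∀ t : T, IsChain (· ≤ ·) {s : T | s < t}

/-- `ht` is *the* height function of the tree: it is strictly monotone on comparable pairs and
the heights of the strict predecessors of `t` are exactly the ordinals below `ht t`; together
with `PredsChain` this says that the set `t↓` of strict predecessors of `t` is well-ordered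
with order type `ht t`. -/
def IsHeightFun (ht : T → Ordinal) : Prop :=
  (∀ s t : T, s < t → ht s < ht t) ∧
  ∀ t : T, ∀ o : Ordinal, o < ht t → ∃ s : T, s < t ∧ ht s = o

/-- The tree has height `ω₁`: every node has height `< ω₁` and every countable ordinal is the
height of some node. -/
def HeightOmega1 (ht : T → Ordinal) : Prop :=
  (∀ t : T, ht t < omega1) ∧ ∀ o : Ordinal, o < omega1 → ∃ t : T, ht t = o

/-- All levels of the tree are countable. -/
def CountableLevels (ht : T → Ordinal) : Prop :=
  ∀ o : Ordinal, {t : T | ht t = o}.Countable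

/-- A tree of height `ω₁` is well-pruned if every node has successors in all later levels. -/
def WellPruned (ht : T → Ordinal) : Prop :=
  ∀ o o' : Ordinal, o < o' → o' < omega1 →
    ∀ s : T, ht s = o → ∃ t : T, s < t ∧ ht t = o'

/-- A special subset of a tree: a union of countably many antichains. -/
def IsSpecialSet (U : Set T) : Prop :=
  ∃ A : ℕ → Set T, (∀ n : ℕ, IsAntichain (· ≤ ·) (A n)) ∧ U ⊆ ⋃ n, A n

/-- Membership in the ideal `NS^T`: there is a regressive map on `B` all of whose fibers
are special. -/
def InNS [OrderBot T] (B : Set T) : Prop :=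
  ∃ f : T → T, (∀ t ∈ B, t ≠ ⊥ → f t < t) ∧
    ∀ t : T, IsSpecialSet {s : T | s ∈ B ∧ f s = t}

/-- The diamond principle `◊_T` for a tree `T`. -/
def DiamondTree (T : Type*) [PartialOrder T] [OrderBot T] : Prop :=
  ∃ D : T → Set T, (∀ t : T, D t ⊆ Set.Iio t) ∧
    ∀ X : Set T, ¬ InNS {t : T | X ∩ Set.Iio t = D t}

end TreeDefs

/-- Club subsets of `ω₁`: closed and unbounded in `ω₁`. -/
def IsClubIn (C : Set Ordinal) : Prop :=
  C ⊆ Set.Iio omega1 ∧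
  (∀ o : Ordinal, o < omega1 → ∃ b ∈ C, o < b) ∧
  ∀ o : Ordinal, o < omega1 → (C ∩ Set.Iio o).Nonempty →
    IsLUB (C ∩ Set.Iio o) o → o ∈ C

/-- Stationary subsets of `ω₁`: sets meeting every club. -/
def IsStationaryIn (S : Set Ordinal) : Prop :=
  ∀ C : Set Ordinal, IsClubIn C → (S ∩ C).Nonempty

/-- The diamond principle `◊(S)` for `S ⊆ ω₁`;  `◊` is `DiamondOn (Set.Iio omega1)`. -/
def DiamondOn (S : Set Ordinal) : Prop :=
  ∃ D : Ordinal → Set Ordinal, (∀ o ∈ S, D o ⊆ Set.Iio o) ∧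
    ∀ X : Set Ordinal, X ⊆ Set.Iio omega1 →
      IsStationaryIn {o ∈ S | X ∩ Set.Iio o = D o}

section SuccPartition

variable {T : Type*} [PartialOrder T]

/-- The set of immediate successors of `t`: nodes above `t` of height `ht t + 1`. -/
def TreeSucc (ht : T → Ordinal) (t : T) : Set T :=
  {s : T | t < s ∧ ht s = ht t + 1}

/-- A successor-partition: a partition of the immediate successors of each node into two
disjoint (possibly empty) pieces. -/
def IsSuccPartition (ht : T → Ordinal) (Q : T → Bool → Set T) : Prop :=
  ∀ t : T, Q t false ∪ Q t true = TreeSucc ht t ∧ Q t false ∩ Q t true = ∅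

/-- `W` is the subtree `T(Q, f)` determined by the successor-partition `Q` and `f : T → 2`:
it is downward closed, contains the root, the immediate successors in `W` of any `t ∈ W` are
exactly `Q t (f t)`, and a node of limit height belongs to `W` whenever all of its strict
predecessors do. -/
def IsInducedSubtree [OrderBot T] (ht : T → Ordinal) (Q : T → Bool → Set T)
    (f : T → Bool) (W : Set T) : Prop :=
  (∀ s t : T, s ≤ t → t ∈ W → s ∈ W) ∧
  (⊥ : T) ∈ W ∧
  (∀ t ∈ W, TreeSucc ht t ∩ W = Q t (f t)) ∧
  ∀ t : T, Order.IsSuccLimit (ht t) → (∀ s : T, s < t → s ∈ W) → t ∈ W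

end SuccPartition

/-!
Let `D_t` consist of those `s < t` for which the branch below `t` continues into `Q_s(1)`.
For `X ⊆ T`, the set `B` of nodes `t` with `X ∩ t↓ = D_t` is exactly the subtree `T(Q, 1_X)`,
which is nonspecial by niceness. On the other hand, a downward closed set carrying a regressive
map with special fibres is special: iterating the map brings every node of `B` down to the root
in finitely many steps, and the nodes reaching the root after `n + 1` steps lie in a union of
fibres over a special set, which is special because the fibres sit in disjoint cones above an
antichain. Hence `B ∉ NS^T`.
-/

section Special

variable {T : Type*} [PartialOrder T]

lemma IsSpecialSet.mono {U V : Set T} (hV : IsSpecialSet V) (hUV : U ⊆ V) : IsSpecialSet U :=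
  let ⟨A, hA, hVA⟩ := hV
  ⟨A, hA, hUV.trans hVA⟩

lemma isSpecialSet_singleton (a : T) : IsSpecialSet ({a} : Set T) :=
  ⟨fun _ => {a}, fun _ => subsingleton_singleton.isAntichain _,
    subset_iUnion (fun _ : ℕ => {a}) 0⟩

lemma isSpecialSet_iUnion {U : ℕ → Set T} (hU : ∀ n, IsSpecialSet (U n)) :
    IsSpecialSet (⋃ n, U n) := by
  choose A hA hUA using hU
  refine ⟨fun k => A k.unpair.1 k.unpair.2, fun k => hA _ _, iUnion_subset fun n t ht => ?_⟩
  obtain ⟨m, htm⟩ := mem_iUnion.1 (hUA n ht)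
  exact mem_iUnion.2 ⟨Nat.pair n m, by simpa only [Nat.unpair_pair] using htm⟩

lemma IsSpecialSet.union {U V : Set T} (hU : IsSpecialSet U) (hV : IsSpecialSet V) :
    IsSpecialSet (U ∪ V) := by
  refine (isSpecialSet_iUnion (U := fun n => if n = 0 then U else V) fun n => ?_).mono ?_
  · split <;> assumption
  · rintro t (ht | ht)
    · exact mem_iUnion.2 ⟨0, by simpa using ht⟩
    · exact mem_iUnion.2 ⟨1, by simpa using ht⟩

/-- Cones above distinct members of an antichain are disjoint and pairwise incomparable, so
the antichains covering the pieces can be merged level by level. -/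
lemma isSpecialSet_biUnion_of_isAntichain (hchain : PredsChain T) {A : Set T}
    (hA : IsAntichain (· ≤ ·) A) {S : T → Set T} (hS : ∀ a ∈ A, IsSpecialSet (S a))
    (hSA : ∀ a ∈ A, S a ⊆ Ioi a) : IsSpecialSet (⋃ a ∈ A, S a) := by
  choose F hF hSF using hS
  refine ⟨fun n => ⋃ (a) (ha : a ∈ A), F a ha n ∩ Ioi a, fun n => ?_, ?_⟩
  · intro t ht u hu htu hle
    simp only [mem_iUnion, mem_inter_iff, mem_Ioi] at ht hu
    obtain ⟨a, ha, hta, hat⟩ := ht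
    obtain ⟨b, hb, hub, hbu⟩ := hu
    rcases eq_or_ne a b with rfl | hab
    · exact hF a ha n hta hub htu hle
    · rcases hchain u (hat.trans_le hle) hbu hab with h | h
      · exact hA ha hb hab h
      · exact hA hb ha hab.symm h
  · refine iUnion₂_subset fun a ha t ht => ?_
    obtain ⟨n, htn⟩ := mem_iUnion.1 (hSF a ha ht)
    exact mem_iUnion.2 ⟨n, mem_iUnion₂.2 ⟨a, ha, htn, hSA a ha ht⟩⟩

lemma IsSpecialSet.biUnion_of_subset_Ioi (hchain : PredsChain T) {I : Set T}
    (hI : IsSpecialSet I) {S : T → Set T} (hS : ∀ a ∈ I, IsSpecialSet (S a))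
    (hSI : ∀ a ∈ I, S a ⊆ Ioi a) : IsSpecialSet (⋃ a ∈ I, S a) := by
  obtain ⟨A, hA, hIA⟩ := hI
  refine (isSpecialSet_iUnion fun n => isSpecialSet_biUnion_of_isAntichain hchain
    ((hA n).subset inter_subset_left) (fun a ha => hS a ha.2) (fun a ha => hSI a ha.2)).mono ?_
  refine iUnion₂_subset fun a ha t ht => ?_
  obtain ⟨n, han⟩ := mem_iUnion.1 (hIA ha)
  exact mem_iUnion.2 ⟨n, mem_iUnion₂.2 ⟨a, ⟨han, ha⟩, ht⟩⟩

variable [OrderBot T] {B : Set T} {g : T → T}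

lemma exists_iterate_eq_bot_of_regressive [WellFoundedLT T]
    (hB : ∀ s t, s ≤ t → t ∈ B → s ∈ B) (hg : ∀ t ∈ B, t ≠ ⊥ → g t < t) :
    ∀ t ∈ B, ∃ n : ℕ, g^[n] t = ⊥ := by
  intro t
  induction t using WellFoundedLT.induction with
  | _ t IH =>
    intro htB
    rcases eq_or_ne t ⊥ with rfl | hne
    · exact ⟨0, rfl⟩
    · obtain ⟨n, hn⟩ := IH (g t) (hg t htB hne) (hB _ _ (hg t htB hne).le htB)
      exact ⟨n + 1, hn⟩

lemma isSpecialSet_iterate_eq_bot_of_regressive (hchain : PredsChain T)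
    (hB : ∀ s t, s ≤ t → t ∈ B → s ∈ B) (hg : ∀ t ∈ B, t ≠ ⊥ → g t < t)
    (hfib : ∀ t, IsSpecialSet {s | s ∈ B ∧ g s = t}) (n : ℕ) :
    IsSpecialSet {t | t ∈ B ∧ g^[n] t = ⊥} := by
  induction n with
  | zero => exact (isSpecialSet_singleton ⊥).mono fun t ht => ht.2
  | succ n IH =>
    refine ((isSpecialSet_singleton ⊥).union (IH.biUnion_of_subset_Ioi hchain
      (S := fun s => {u | u ∈ B ∧ g u = s} ∩ Ioi s)
      (fun s _ => (hfib s).mono inter_subset_left) (fun s _ => inter_subset_right))).mono ?_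
    rintro t ⟨htB, hit⟩
    rcases eq_or_ne t ⊥ with rfl | hne
    · exact Or.inl rfl
    · exact Or.inr <| mem_iUnion₂.2
        ⟨g t, ⟨hB _ _ (hg t htB hne).le htB, hit⟩, ⟨htB, rfl⟩, hg t htB hne⟩

lemma IsSpecialSet.of_inNS [WellFoundedLT T] (hchain : PredsChain T)
    (hB : ∀ s t, s ≤ t → t ∈ B → s ∈ B) (hNS : InNS B) : IsSpecialSet B := by
  obtain ⟨g, hg, hfib⟩ := hNS
  refine (isSpecialSet_iUnion
    (isSpecialSet_iterate_eq_bot_of_regressive hchain hB hg hfib)).mono fun t htB => ?_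
  obtain ⟨n, hn⟩ := exists_iterate_eq_bot_of_regressive hB hg t htB
  exact mem_iUnion.2 ⟨n, htB, hn⟩

end Special

section Tree

variable {T : Type*} [PartialOrder T] {ht : T → Ordinal}

lemma le_total_of_le (hchain : PredsChain T) {u v t : T} (hu : u ≤ t) (hv : v ≤ t) :
    u ≤ v ∨ v ≤ u := by
  rcases hu.lt_or_eq with hu | rfl
  · rcases hv.lt_or_eq with hv | rfl
    · rcases eq_or_ne u v with rfl | huv
      · exact Or.inl le_rfl
      · exact hchain t hu hv huv
    · exact Or.inl hu.le
  · exact Or.inr hv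

lemma eq_of_le_of_height_eq (hchain : PredsChain T) (hmono : StrictMono ht) {u v t : T}
    (hu : u ≤ t) (hv : v ≤ t) (h : ht u = ht v) : u = v := by
  rcases le_total_of_le hchain hu hv with huv | hvu
  · exact huv.eq_or_lt.resolve_right fun hlt => (hmono hlt).ne h
  · exact (hvu.eq_or_lt.resolve_right fun hlt => (hmono hlt).ne h.symm).symm

lemma lt_of_height_lt (hchain : PredsChain T) (hmono : StrictMono ht) {u v t : T}
    (hu : u ≤ t) (hv : v ≤ t) (h : ht u < ht v) : u < v :=
  (le_total_of_le hchain hu hv).elim (fun huv => huv.lt_of_ne (by rintro rfl; exact h.false))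
    fun hvu => absurd (hmono.monotone hvu) h.not_ge

lemma exists_mem_treeSucc_le (hchain : PredsChain T) (hht : IsHeightFun ht) {s t : T}
    (hst : s < t) : ∃ v ∈ TreeSucc ht s, v ≤ t := by
  rcases (Order.add_one_le_of_lt (hht.1 s t hst)).lt_or_eq with hlt | heq
  · obtain ⟨v, hvt, hv⟩ := hht.2 t _ hlt
    exact ⟨v, ⟨lt_of_height_lt hchain (hht.1 · · ·) hst.le hvt.le
      (hv ▸ Order.lt_add_one_iff.2 le_rfl), hv⟩, hvt.le⟩
  · exact ⟨t, ⟨hst, heq.symm⟩, le_rfl⟩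

lemma lt_or_eq_of_lt_of_mem_treeSucc (hchain : PredsChain T) (hmono : StrictMono ht)
    {s t u : T} (hu : u ∈ TreeSucc ht t) (hsu : s < u) : s < t ∨ s = t := by
  refine (le_total_of_le hchain hsu.le hu.1.le).elim (·.lt_or_eq) fun hts => Or.inr ?_
  refine (hts.eq_or_lt.resolve_right fun hlt => ?_).symm
  exact (Order.lt_add_one_iff.1 (hu.2 ▸ hmono hsu)).not_gt (hmono hlt)

variable {Q : T → Bool → Set T}

lemma IsSuccPartition.subset_treeSucc (hQ : IsSuccPartition ht Q) (t : T) (b : Bool) :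
    Q t b ⊆ TreeSucc ht t := by
  rw [← (hQ t).1]
  cases b
  · exact subset_union_left
  · exact subset_union_right

lemma IsSuccPartition.mem_false_iff (hQ : IsSuccPartition ht Q) {t u : T}
    (hu : u ∈ TreeSucc ht t) : u ∈ Q t false ↔ u ∉ Q t true := by
  rw [← (hQ t).1] at hu
  exact ⟨fun hf htr => eq_empty_iff_forall_notMem.1 (hQ t).2 u ⟨hf, htr⟩, hu.resolve_right⟩

def partitionGuess (ht : T → Ordinal) (Q : T → Bool → Set T) (t : T) : Set T :=
  {s | s < t ∧ ∃ v ∈ TreeSucc ht s, v ≤ t ∧ v ∈ Q s true}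

lemma partitionGuess_subset_Iio (t : T) : partitionGuess ht Q t ⊆ Iio t :=
  fun _ hs => hs.1

lemma mem_partitionGuess_iff_of_lt_of_le (hchain : PredsChain T) (hht : IsHeightFun ht)
    {s u t : T} (hsu : s < u) (hut : u ≤ t) :
    s ∈ partitionGuess ht Q t ↔ s ∈ partitionGuess ht Q u := by
  constructor
  · rintro ⟨-, v, hv, hvt, hvQ⟩
    obtain ⟨w, hw, hwu⟩ := exists_mem_treeSucc_le hchain hht hsu
    obtain rfl : v = w := eq_of_le_of_height_eq hchain (hht.1 · · ·) hvt (hwu.trans hut)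
      (hv.2.trans hw.2.symm)
    exact ⟨hsu, v, hw, hwu, hvQ⟩
  · rintro ⟨-, v, hv, hvu, hvQ⟩
    exact ⟨hsu.trans_le hut, v, hv, hvu.trans hut, hvQ⟩

lemma mem_partitionGuess_iff_of_mem_treeSucc (hchain : PredsChain T) (hmono : StrictMono ht)
    {t u : T} (hu : u ∈ TreeSucc ht t) : t ∈ partitionGuess ht Q u ↔ u ∈ Q t true := by
  constructor
  · rintro ⟨-, v, hv, hvu, hvQ⟩
    rwa [eq_of_le_of_height_eq hchain hmono hvu le_rfl (hv.2.trans hu.2.symm)] at hvQ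
  · exact fun h => ⟨hu.1, u, hu, le_rfl, h⟩

end Tree

section InducedSubtree

variable {T : Type*} [PartialOrder T] {ht : T → Ordinal} {Q : T → Bool → Set T} {X : Set T}

def correctGuesses (ht : T → Ordinal) (Q : T → Bool → Set T) (X : Set T) : Set T :=
  {t | X ∩ Iio t = partitionGuess ht Q t}

lemma inter_Iio_eq_iff {G : Set T} {t : T} (hG : G ⊆ Iio t) :
    X ∩ Iio t = G ↔ ∀ s < t, (s ∈ X ↔ s ∈ G) := by
  constructor
  · rintro rfl s hs
    simp [hs]
  · refine fun h => Subset.antisymm (fun s hs => (h s hs.2).1 hs.1) fun s hs => ?_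
    exact ⟨(h s (hG hs)).2 hs, hG hs⟩

lemma mem_correctGuesses_iff {t : T} :
    t ∈ correctGuesses ht Q X ↔ ∀ s < t, (s ∈ X ↔ s ∈ partitionGuess ht Q t) :=
  inter_Iio_eq_iff (partitionGuess_subset_Iio t)

lemma mem_correctGuesses_of_le (hchain : PredsChain T) (hht : IsHeightFun ht) {s t : T}
    (hst : s ≤ t) (htX : t ∈ correctGuesses ht Q X) :
    s ∈ correctGuesses ht Q X := by
  rw [mem_correctGuesses_iff] at htX ⊢
  exact fun u hus => (htX u (hus.trans_le hst)).trans
    (mem_partitionGuess_iff_of_lt_of_le hchain hht hus hst)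

lemma mem_correctGuesses_of_mem_treeSucc_iff (hchain : PredsChain T) (hht : IsHeightFun ht)
    {t u : T} (htX : t ∈ correctGuesses ht Q X) (hu : u ∈ TreeSucc ht t) :
    u ∈ correctGuesses ht Q X ↔ (t ∈ X ↔ u ∈ Q t true) := by
  have hmono : StrictMono ht := (hht.1 · · ·)
  rw [mem_correctGuesses_iff] at htX ⊢
  rw [← mem_partitionGuess_iff_of_mem_treeSucc hchain hmono hu]
  refine ⟨fun hu' => hu' t hu.1, fun htu s hsu => ?_⟩
  rcases lt_or_eq_of_lt_of_mem_treeSucc hchain hmono hu hsu with hst | rfl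
  · exact (htX s hst).trans (mem_partitionGuess_iff_of_lt_of_le hchain hht hst hu.1.le).symm
  · exact htu

lemma mem_correctGuesses_of_isSuccLimit (hchain : PredsChain T) (hht : IsHeightFun ht) {t : T}
    (hlim : Order.IsSuccLimit (ht t))
    (hpred : ∀ s < t, s ∈ correctGuesses ht Q X) :
    t ∈ correctGuesses ht Q X := by
  rw [mem_correctGuesses_iff]
  intro s hst
  obtain ⟨v, hvt, hv⟩ := hht.2 t _ (hlim.add_one_lt (hht.1 s t hst))
  have hsv : s < v := lt_of_height_lt hchain (hht.1 · · ·) hst.le hvt.le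
    (hv ▸ Order.lt_add_one_iff.2 le_rfl)
  exact (mem_correctGuesses_iff.1 (hpred v hvt) s hsv).trans
    (mem_partitionGuess_iff_of_lt_of_le hchain hht hsv hvt.le).symm

open Classical in
theorem isInducedSubtree_correctGuesses [OrderBot T] (hchain : PredsChain T)
    (hht : IsHeightFun ht) (hQ : IsSuccPartition ht Q) :
    IsInducedSubtree ht Q (fun s => decide (s ∈ X)) (correctGuesses ht Q X) := by
  refine ⟨fun s t hst => mem_correctGuesses_of_le hchain hht hst,
    mem_correctGuesses_iff.2 fun s hs => absurd hs not_lt_bot, fun t htX => ?_,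
    fun t => mem_correctGuesses_of_isSuccLimit hchain hht⟩
  ext u
  by_cases hu : u ∈ TreeSucc ht t
  · rw [mem_inter_iff, and_iff_right hu,
      mem_correctGuesses_of_mem_treeSucc_iff hchain hht htX hu]
    by_cases hX : t ∈ X <;> simp [hX, hQ.mem_false_iff hu]
  · exact iff_of_false (fun h => hu h.1) fun h => hu (hQ.subset_treeSucc t _ h)

end InducedSubtree

theorem stmt10_general {T : Type*} [PartialOrder T] [OrderBot T]
    (hchain : PredsChain T) (ht : T → Ordinal)
    (hht : IsHeightFun ht)
    (hQnice : ∃ Q : T → Bool → Set T, IsSuccPartition ht Q ∧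
      ∀ f : T → Bool, ∀ W : Set T, IsInducedSubtree ht Q f W → ¬ IsSpecialSet W) :
    DiamondTree T := by
  obtain ⟨Q, hQ, hnice⟩ := hQnice
  have : WellFoundedLT T := StrictMono.wellFoundedLT (f := ht) (hht.1 · · ·)
  refine ⟨partitionGuess ht Q, partitionGuess_subset_Iio, fun X hNS => ?_⟩
  have hsubtree := isInducedSubtree_correctGuesses (X := X) hchain hht hQ
  exact hnice _ _ hsubtree (IsSpecialSet.of_inNS hchain hsubtree.1 hNS)

/-- Let `T` be a tree of height `ω₁`. If `T` admits a nice
successor-partition (one all of whose induced subtrees `T(Q, f)` are nonspecial),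
then `◊_T` holds. -/
theorem stmt10 {T : Type*} [PartialOrder T] [OrderBot T]
    (hchain : PredsChain T) (ht : T → Ordinal)
    (hht : IsHeightFun ht) (hΩ : HeightOmega1 ht)
    (hQnice : ∃ Q : T → Bool → Set T, IsSuccPartition ht Q ∧
      ∀ f : T → Bool, ∀ W : Set T, IsInducedSubtree ht Q f W → ¬ IsSpecialSet W) :
    DiamondTree T :=
  stmt10_general hchain ht hht hQnice
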